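/- Let H be an n-vertex C5-free 3-graph with δ2^+(H) ≥ n/2 containing a K4 on vi, vj, vk, vl. Then N(vi, vj) = V(H) \ N(vk, vl), i.e., the links of opposite pairs of the K4 partition the vertex set. -/
import Mathlib


open Finset

/-- The link (co-neighborhood) of the pair `{u,v}`: all `w` with `{u,v,w}` an edge. -/
def link {n : ℕ} (E : Finset (Finset (Fin n))) (u v : Fin n) : Finset (Fin n) :=
  Finset.univ.filter (fun w => ({u, v, w} : Finset (Fin n)) ∈ E)

/-- `E` is the edge set of a 3-graph: every edge has exactly 3 vertices. -/
def isEdgeSet {n : ℕ} (E : Finset (Finset (Fin n))) : Prop := ∀ e ∈ E, e.card = 3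

/-- `E` contains a copy of `C5⁻ = {abc, bcd, cde, dea}`. -/
def hasC5minus {n : ℕ} (E : Finset (Finset (Fin n))) : Prop :=
  ∃ a b c d e : Fin n,
    a ≠ b ∧ a ≠ c ∧ a ≠ d ∧ a ≠ e ∧ b ≠ c ∧ b ≠ d ∧ b ≠ e ∧ c ≠ d ∧ c ≠ e ∧ d ≠ e ∧
    ({a, b, c} : Finset (Fin n)) ∈ E ∧ ({b, c, d} : Finset (Fin n)) ∈ E ∧
    ({c, d, e} : Finset (Fin n)) ∈ E ∧ ({d, e, a} : Finset (Fin n)) ∈ E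

/-- `E` contains a copy of `C5 = {abc, bcd, cde, dea, eab}`. -/
def hasC5 {n : ℕ} (E : Finset (Finset (Fin n))) : Prop :=
  ∃ a b c d e : Fin n,
    a ≠ b ∧ a ≠ c ∧ a ≠ d ∧ a ≠ e ∧ b ≠ c ∧ b ≠ d ∧ b ≠ e ∧ c ≠ d ∧ c ≠ e ∧ d ≠ e ∧
    ({a, b, c} : Finset (Fin n)) ∈ E ∧ ({b, c, d} : Finset (Fin n)) ∈ E ∧
    ({c, d, e} : Finset (Fin n)) ∈ E ∧ ({d, e, a} : Finset (Fin n)) ∈ E ∧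
    ({e, a, b} : Finset (Fin n)) ∈ E

/-- `a, b, c, d` form a `K4` in `E`: all four triples among them are edges. -/
def isK4 {n : ℕ} (E : Finset (Finset (Fin n))) (a b c d : Fin n) : Prop :=
  a ≠ b ∧ a ≠ c ∧ a ≠ d ∧ b ≠ c ∧ b ≠ d ∧ c ≠ d ∧
  ({a, b, c} : Finset (Fin n)) ∈ E ∧ ({a, b, d} : Finset (Fin n)) ∈ E ∧
  ({a, c, d} : Finset (Fin n)) ∈ E ∧ ({b, c, d} : Finset (Fin n)) ∈ E

/-- `E` contains a copy of `K4⁻ = {abc, abd, acd}`. -/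
def hasK4minus {n : ℕ} (E : Finset (Finset (Fin n))) : Prop :=
  ∃ a b c d : Fin n, a ≠ b ∧ a ≠ c ∧ a ≠ d ∧ b ≠ c ∧ b ≠ d ∧ c ≠ d ∧
    ({a, b, c} : Finset (Fin n)) ∈ E ∧ ({a, b, d} : Finset (Fin n)) ∈ E ∧
    ({a, c, d} : Finset (Fin n)) ∈ E

/-- `A`-set of a `K4`: intersection of the three pairwise links of `{x, y, z}`
(the set `A_w` for the fourth vertex `w` of the `K4`). -/
def Aset {n : ℕ} (E : Finset (Finset (Fin n))) (x y z : Fin n) : Finset (Fin n) :=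
  link E x y ∩ link E y z ∩ link E z x

/-- `B`-set of a `K4`: `B_w = N(w,x) ∩ N(w,y) ∩ N(w,z)`. -/
def Bset {n : ℕ} (E : Finset (Finset (Fin n))) (w x y z : Fin n) : Finset (Fin n) :=
  link E w x ∩ link E w y ∩ link E w z

lemma mem_of_eq {n : ℕ} {E : Finset (Finset (Fin n))} {s t : Finset (Fin n)}
    (h : s ∈ E) (he : t = s) : t ∈ E := he ▸ h

lemma mem_link {n : ℕ} {E : Finset (Finset (Fin n))} {u v w : Fin n} :
    w ∈ link E u v ↔ ({u, v, w} : Finset (Fin n)) ∈ E := by simp [link]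

lemma link_comm {n : ℕ} (E : Finset (Finset (Fin n))) (u v : Fin n) :
    link E u v = link E v u := by
  ext w
  rw [mem_link, mem_link, show ({u,v,w} : Finset (Fin n)) = {v,u,w} from by ext x; simp; try tauto]

lemma edge_nes {n : ℕ} {E : Finset (Finset (Fin n))} (hE : isEdgeSet E) {a b c : Fin n}
    (h : ({a, b, c} : Finset (Fin n)) ∈ E) : a ≠ b ∧ a ≠ c ∧ b ≠ c := by
  have h3 := hE _ h
  refine ⟨?_, ?_, ?_⟩ <;> rintro rfl
  · rw [show ({a,a,c} : Finset (Fin n)) = {a,c} from by ext x; simp; try tauto] at h3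
    have h2 : ({a,c} : Finset (Fin n)).card ≤ 2 :=
      le_trans (Finset.card_insert_le _ _) (by simp)
    omega
  · rw [show ({a,b,a} : Finset (Fin n)) = {a,b} from by ext x; simp; try tauto] at h3
    have h2 : ({a,b} : Finset (Fin n)).card ≤ 2 :=
      le_trans (Finset.card_insert_le _ _) (by simp)
    omega
  · rw [show ({a,b,b} : Finset (Fin n)) = {a,b} from by ext x; simp; try tauto] at h3
    have h2 : ({a,b} : Finset (Fin n)).card ≤ 2 :=
      le_trans (Finset.card_insert_le _ _) (by simp)
    omega

lemma k4_swap12 {n : ℕ} {E : Finset (Finset (Fin n))} {a b c d : Fin n}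
    (h : isK4 E a b c d) : isK4 E b a c d := by
  obtain ⟨hab, hac, had, hbc, hbd, hcd, e1, e2, e3, e4⟩ := h
  exact ⟨hab.symm, hbc, hbd, hac, had, hcd,
    mem_of_eq e1 (by ext x; simp; try tauto), mem_of_eq e2 (by ext x; simp; try tauto),
    e4, e3⟩

lemma k4_swap34 {n : ℕ} {E : Finset (Finset (Fin n))} {a b c d : Fin n}
    (h : isK4 E a b c d) : isK4 E a b d c := by
  obtain ⟨hab, hac, had, hbc, hbd, hcd, e1, e2, e3, e4⟩ := h
  exact ⟨hab, had, hac, hbd, hbc, hcd.symm,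
    e2, e1, mem_of_eq e3 (by ext x; simp; try tauto), mem_of_eq e4 (by ext x; simp; try tauto)⟩

lemma k4_swap23 {n : ℕ} {E : Finset (Finset (Fin n))} {a b c d : Fin n}
    (h : isK4 E a b c d) : isK4 E a c b d := by
  obtain ⟨hab, hac, had, hbc, hbd, hcd, e1, e2, e3, e4⟩ := h
  exact ⟨hac, hab, had, hbc.symm, hcd, hbd,
    mem_of_eq e1 (by ext x; simp; try tauto), e3, e2, mem_of_eq e4 (by ext x; simp; try tauto)⟩

/-- Core rule: a vertex in the links of both pairs of an opposite pairing of a K4,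
and also in the link of a cross pair, yields a C5. -/
lemma key {n : ℕ} {E : Finset (Finset (Fin n))} (hE : isEdgeSet E) (hC5 : ¬ hasC5 E)
    {a b c d : Fin n} (hK4 : isK4 E a b c d) {t : Fin n}
    (h1 : t ∈ link E a b) (h2 : t ∈ link E c d) (h3 : t ∈ link E a c) : False := by
  obtain ⟨hab, hac, had, hbc, hbd, hcd, eabc, eabd, eacd, ebcd⟩ := hK4
  rw [mem_link] at h1 h2 h3
  obtain ⟨-, hat, hbt⟩ := edge_nes hE h1
  obtain ⟨-, hct, hdt⟩ := edge_nes hE h2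
  apply hC5
  exact ⟨t, a, b, d, c, hat.symm, hbt.symm, hdt.symm, hct.symm, hab, had, hac, hbd, hbc,
    hcd.symm,
    mem_of_eq h1 (by ext x; simp; try tauto),
    eabd,
    mem_of_eq ebcd (by ext x; simp; try tauto),
    mem_of_eq h2 (by ext x; simp; try tauto),
    mem_of_eq h3 (by ext x; simp; try tauto)⟩

/-- Fact 2: in a `C5`-free 3-graph with min positive co-degree ≥ `n/2`
containing a `K4`, the links of opposite pairs of the `K4` are complementary. -/
theorem stmt_7 (n : ℕ) (E : Finset (Finset (Fin n))) (hE : isEdgeSet E)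
    (hC5free : ¬ hasC5 E)
    (hdeg : ∀ u v : Fin n, (link E u v).Nonempty → n ≤ 2 * (link E u v).card)
    (vi vj vk vl : Fin n) (hK4 : isK4 E vi vj vk vl) :
    link E vi vj = Finset.univ \ link E vk vl := by
  have hK4' := hK4
  obtain ⟨hij, hik, hil, hjk, hjl, hkl, eijk, eijl, eikl, ejkl⟩ := hK4
  have Kikjl : isK4 E vi vk vj vl := k4_swap23 hK4'
  have Kijlk : isK4 E vi vj vl vk := k4_swap34 hK4'
  have Kiljk : isK4 E vi vl vj vk := k4_swap23 Kijlk
  set A := link E vi vj with hAdef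
  set B := link E vk vl with hBdef
  set C := link E vi vk with hCdef
  set D := link E vj vl with hDdef
  set F := link E vi vl with hFdef
  set G := link E vj vk with hGdef
  -- the twelve exclusion rules
  have n1 : ∀ t : Fin n, t ∈ A → t ∈ B → t ∈ C → False :=
    fun t h1 h2 h3 => key hE hC5free hK4' h1 h2 h3
  have n2 : ∀ t : Fin n, t ∈ A → t ∈ B → t ∈ D → False :=
    fun t h1 h2 h3 => key hE hC5free (k4_swap34 (k4_swap12 hK4'))
      (by rwa [hAdef, link_comm] at h1) (by rwa [hBdef, link_comm] at h2) h3
  have n3 : ∀ t : Fin n, t ∈ A → t ∈ B → t ∈ F → False :=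
    fun t h1 h2 h3 => key hE hC5free Kijlk h1 (by rwa [hBdef, link_comm] at h2) h3
  have n4 : ∀ t : Fin n, t ∈ A → t ∈ B → t ∈ G → False :=
    fun t h1 h2 h3 => key hE hC5free (k4_swap12 hK4')
      (by rwa [hAdef, link_comm] at h1) h2 h3
  have n5 : ∀ t : Fin n, t ∈ C → t ∈ D → t ∈ A → False :=
    fun t h1 h2 h3 => key hE hC5free Kikjl h1 h2 h3
  have n6 : ∀ t : Fin n, t ∈ C → t ∈ D → t ∈ B → False :=
    fun t h1 h2 h3 => key hE hC5free (k4_swap34 (k4_swap12 Kikjl))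
      (by rwa [hCdef, link_comm] at h1) (by rwa [hDdef, link_comm] at h2) h3
  have n7 : ∀ t : Fin n, t ∈ C → t ∈ D → t ∈ F → False :=
    fun t h1 h2 h3 => key hE hC5free (k4_swap34 Kikjl) h1
      (by rwa [hDdef, link_comm] at h2) h3
  have n8 : ∀ t : Fin n, t ∈ C → t ∈ D → t ∈ G → False :=
    fun t h1 h2 h3 => key hE hC5free (k4_swap12 Kikjl)
      (by rwa [hCdef, link_comm] at h1) h2 (by rwa [hGdef, link_comm] at h3)
  have n9 : ∀ t : Fin n, t ∈ F → t ∈ G → t ∈ A → False :=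
    fun t h1 h2 h3 => key hE hC5free Kiljk h1 h2 h3
  have n10 : ∀ t : Fin n, t ∈ F → t ∈ G → t ∈ B → False :=
    fun t h1 h2 h3 => key hE hC5free (k4_swap34 (k4_swap12 Kiljk))
      (by rwa [hFdef, link_comm] at h1) (by rwa [hGdef, link_comm] at h2)
      (by rwa [hBdef, link_comm] at h3)
  have n11 : ∀ t : Fin n, t ∈ F → t ∈ G → t ∈ C → False :=
    fun t h1 h2 h3 => key hE hC5free (k4_swap34 Kiljk) h1
      (by rwa [hGdef, link_comm] at h2) h3
  have n12 : ∀ t : Fin n, t ∈ F → t ∈ G → t ∈ D → False :=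
    fun t h1 h2 h3 => key hE hC5free (k4_swap12 Kiljk)
      (by rwa [hFdef, link_comm] at h1) h2 (by rwa [hDdef, link_comm] at h3)
  -- nonemptiness / codegree bounds
  have memA : vk ∈ A := mem_link.mpr eijk
  have memB : vi ∈ B := mem_link.mpr (mem_of_eq eikl (by ext x; simp; try tauto))
  have memC : vj ∈ C := mem_link.mpr (mem_of_eq eijk (by ext x; simp; try tauto))
  have memD : vi ∈ D := mem_link.mpr (mem_of_eq eijl (by ext x; simp; try tauto))
  have memF : vj ∈ F := mem_link.mpr (mem_of_eq eijl (by ext x; simp; try tauto))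
  have memG : vi ∈ G := mem_link.mpr (mem_of_eq eijk (by ext x; simp; try tauto))
  have cA : n ≤ 2 * A.card := hdeg vi vj ⟨vk, memA⟩
  have cB : n ≤ 2 * B.card := hdeg vk vl ⟨vi, memB⟩
  have cC : n ≤ 2 * C.card := hdeg vi vk ⟨vj, memC⟩
  have cD : n ≤ 2 * D.card := hdeg vj vl ⟨vi, memD⟩
  have cF : n ≤ 2 * F.card := hdeg vi vl ⟨vj, memF⟩
  have cG : n ≤ 2 * G.card := hdeg vj vk ⟨vi, memG⟩
  -- disjointness facts
  have dis1 : Disjoint (A ∪ B) ((C ∩ D) ∪ (F ∩ G)) := by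
    rw [Finset.disjoint_left]
    intro t ht hm
    rcases Finset.mem_union.mp ht with h | h <;>
      rcases Finset.mem_union.mp hm with hm' | hm' <;>
        rcases Finset.mem_inter.mp hm' with ⟨p, q⟩
    · exact n5 t p q h
    · exact n9 t p q h
    · exact n6 t p q h
    · exact n10 t p q h
  have dis2 : Disjoint (C ∪ D) ((A ∩ B) ∪ (F ∩ G)) := by
    rw [Finset.disjoint_left]
    intro t ht hm
    rcases Finset.mem_union.mp ht with h | h <;>
      rcases Finset.mem_union.mp hm with hm' | hm' <;>
        rcases Finset.mem_inter.mp hm' with ⟨p, q⟩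
    · exact n1 t p q h
    · exact n11 t p q h
    · exact n2 t p q h
    · exact n12 t p q h
  have dis3 : Disjoint (F ∪ G) ((A ∩ B) ∪ (C ∩ D)) := by
    rw [Finset.disjoint_left]
    intro t ht hm
    rcases Finset.mem_union.mp ht with h | h <;>
      rcases Finset.mem_union.mp hm with hm' | hm' <;>
        rcases Finset.mem_inter.mp hm' with ⟨p, q⟩
    · exact n3 t p q h
    · exact n7 t p q h
    · exact n4 t p q h
    · exact n8 t p q h
  have disXM : Disjoint (A ∩ B) (C ∩ D) := by
    rw [Finset.disjoint_left]
    intro t ht hm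
    exact n1 t (Finset.mem_inter.mp ht).1 (Finset.mem_inter.mp ht).2
      (Finset.mem_inter.mp hm).1
  have disXW : Disjoint (A ∩ B) (F ∩ G) := by
    rw [Finset.disjoint_left]
    intro t ht hm
    exact n3 t (Finset.mem_inter.mp ht).1 (Finset.mem_inter.mp ht).2
      (Finset.mem_inter.mp hm).1
  have disMW : Disjoint (C ∩ D) (F ∩ G) := by
    rw [Finset.disjoint_left]
    intro t ht hm
    exact n7 t (Finset.mem_inter.mp ht).1 (Finset.mem_inter.mp ht).2
      (Finset.mem_inter.mp hm).1
  -- counting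
  have u1 : ((A ∪ B) ∪ ((C ∩ D) ∪ (F ∩ G))).card ≤ n :=
    le_trans (Finset.card_le_univ _) (by simp)
  have u2 : ((C ∪ D) ∪ ((A ∩ B) ∪ (F ∩ G))).card ≤ n :=
    le_trans (Finset.card_le_univ _) (by simp)
  have u3 : ((F ∪ G) ∪ ((A ∩ B) ∪ (C ∩ D))).card ≤ n :=
    le_trans (Finset.card_le_univ _) (by simp)
  rw [Finset.card_union_of_disjoint dis1, Finset.card_union_of_disjoint disMW] at u1
  rw [Finset.card_union_of_disjoint dis2, Finset.card_union_of_disjoint disXW] at u2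
  rw [Finset.card_union_of_disjoint dis3, Finset.card_union_of_disjoint disXM] at u3
  have i1 : (A ∪ B).card + (A ∩ B).card = A.card + B.card :=
    Finset.card_union_add_card_inter A B
  have i2 : (C ∪ D).card + (C ∩ D).card = C.card + D.card :=
    Finset.card_union_add_card_inter C D
  have i3 : (F ∪ G).card + (F ∩ G).card = F.card + G.card :=
    Finset.card_union_add_card_inter F G
  have uABle : (A ∪ B).card ≤ n := le_trans (Finset.card_le_univ _) (by simp)
  have hXcard : (A ∩ B).card = 0 := by omega
  have hX : A ∩ B = ∅ := Finset.card_eq_zero.mp hXcard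
  have hU : A ∪ B = Finset.univ := by
    apply Finset.eq_univ_of_card
    rw [Fintype.card_fin]
    omega
  ext t
  simp only [Finset.mem_sdiff, Finset.mem_univ, true_and]
  constructor
  · intro ha hb
    have : t ∈ A ∩ B := Finset.mem_inter.mpr ⟨ha, hb⟩
    rw [hX] at this
    exact absurd this (Finset.notMem_empty t)
  · intro hb
    have : t ∈ A ∪ B := hU ▸ Finset.mem_univ t
    rcases Finset.mem_union.mp this with h | h
    · exact h
    · exact absurd h hb
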